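/- arXiv:0804.4005 — 2 statements merged into one kernel-verified Lean document; each statement's English description precedes it below -/
import Mathlib

section
/- Let N ≥ 1, let R > 1 and γ > 0 be real numbers, and let H be an N×N positive definite Hermitian complex matrix all of whose eigenvalues λ satisfy γ/R ≤ λ ≤ γR. Then every eigenvalue μ of H satisfies R^{-2} ≤ (det H)^{-1/N} · μ ≤ R^{2}, where det H denotes the (real, positive) determinant of H and (det H)^{-1/N} is its real (-1/N)-th power. -/
open Matrix
open scoped ComplexOrder

/-!
Since `det H` is the product of the eigenvalues, `(det H)^(1/N)` is their geometric mean, which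
lies in the same interval `[γ/R, γR]` as the eigenvalues; the ratio of two numbers of that
interval lies in `[R⁻², R²]`.
-/

theorem Matrix.IsHermitian.re_det_eq_prod_eigenvalues {𝕜 n : Type*} [RCLike 𝕜] [Fintype n]
    [DecidableEq n] {A : Matrix n n 𝕜} (hA : A.IsHermitian) :
    RCLike.re A.det = ∏ i, hA.eigenvalues i := by
  rw [hA.det_eq_prod_eigenvalues, ← RCLike.ofReal_prod, RCLike.ofReal_re]

theorem Real.prod_rpow_inv_card_mem_Icc {ι : Type*} [Fintype ι] [Nonempty ι] {f : ι → ℝ}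
    {a b : ℝ} (ha : 0 ≤ a) (h : ∀ i, f i ∈ Set.Icc a b) :
    (∏ i, f i) ^ (Fintype.card ι : ℝ)⁻¹ ∈ Set.Icc a b := by
  have hroot (c : ℝ) (hc : 0 ≤ c) : (∏ _i : ι, c) ^ (Fintype.card ι : ℝ)⁻¹ = c := by
    rw [Finset.prod_const, Finset.card_univ, Real.pow_rpow_inv_natCast hc Fintype.card_ne_zero]
  have hf (i : ι) : 0 ≤ f i := ha.trans (h i).1
  have hb : 0 ≤ b := (hf (Classical.arbitrary ι)).trans (h _).2
  constructor
  · calc a = (∏ _i : ι, a) ^ (Fintype.card ι : ℝ)⁻¹ := (hroot a ha).symm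
      _ ≤ (∏ i, f i) ^ (Fintype.card ι : ℝ)⁻¹ := by
        gcongr with i
        exact (h i).1
  · calc (∏ i, f i) ^ (Fintype.card ι : ℝ)⁻¹ ≤ (∏ _i : ι, b) ^ (Fintype.card ι : ℝ)⁻¹ :=
          Real.rpow_le_rpow (Finset.prod_nonneg fun i _ => hf i)
            (Finset.prod_le_prod (fun i _ => hf i) fun i _ => (h i).2) (by positivity)
      _ = b := hroot b hb

theorem div_mem_Icc_div_of_mem_Icc {α : Type*} [Field α] [LinearOrder α] [IsStrictOrderedRing α]
    {a b x y : α} (ha : 0 < a) (hx : x ∈ Set.Icc a b) (hy : y ∈ Set.Icc a b) :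
    y / x ∈ Set.Icc (a / b) (b / a) :=
  ⟨div_le_div₀ (ha.le.trans hy.1) hy.1 (ha.trans_le hx.1) hx.2,
    div_le_div₀ (ha.le.trans (hx.1.trans hx.2)) hy.2 ha hx.1⟩

theorem det_normalized_eigenvalue_bounds_general
    {N : ℕ} {R γ : ℝ} (hR : 1 < R) (hγ : 0 < γ)
    (H : Matrix (Fin N) (Fin N) ℂ) (hH : H.PosDef)
    (hbd : ∀ i, γ / R ≤ hH.1.eigenvalues i ∧ hH.1.eigenvalues i ≤ γ * R) :
    ∀ i, (R ^ 2)⁻¹ ≤ H.det.re ^ (-(1 : ℝ) / N) * hH.1.eigenvalues i ∧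
      H.det.re ^ (-(1 : ℝ) / N) * hH.1.eigenvalues i ≤ R ^ 2 := by
  intro i
  have : Nonempty (Fin N) := ⟨i⟩
  have hR0 : 0 < R := one_pos.trans hR
  have hdet : H.det.re = ∏ j, hH.1.eigenvalues j := hH.1.re_det_eq_prod_eigenvalues
  have hgeom : H.det.re ^ (N : ℝ)⁻¹ ∈ Set.Icc (γ / R) (γ * R) := by
    simpa only [hdet, Fintype.card_fin] using
      Real.prod_rpow_inv_card_mem_Icc (div_pos hγ hR0).le hbd
  have hratio := div_mem_Icc_div_of_mem_Icc (div_pos hγ hR0) hgeom (hbd i)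
  have hdet_nonneg : 0 ≤ H.det.re :=
    hdet ▸ Finset.prod_nonneg fun j _ => (hH.eigenvalues_pos j).le
  rw [neg_div, one_div, Real.rpow_neg hdet_nonneg, ← div_eq_inv_mul]
  have hR2 : γ * R / (γ / R) = R ^ 2 := by field_simp
  have hR2' : γ / R / (γ * R) = (R ^ 2)⁻¹ := by field_simp
  rwa [hR2, hR2'] at hratio

/-- If all eigenvalues of a positive definite Hermitian `N × N` matrix `H`
lie in `[γ/R, γR]` with `γ > 0`, `R > 1`, then every eigenvalue `μ` of `H` satisfies
`R⁻² ≤ (det H)^(-1/N) · μ ≤ R²`. -/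
theorem det_normalized_eigenvalue_bounds
    {N : ℕ} (hN : 1 ≤ N) {R γ : ℝ} (hR : 1 < R) (hγ : 0 < γ)
    (H : Matrix (Fin N) (Fin N) ℂ) (hH : H.PosDef)
    (hbd : ∀ i, γ / R ≤ hH.1.eigenvalues i ∧ hH.1.eigenvalues i ≤ γ * R) :
    ∀ i, (R ^ 2)⁻¹ ≤ H.det.re ^ (-(1 : ℝ) / N) * hH.1.eigenvalues i ∧
      H.det.re ^ (-(1 : ℝ) / N) * hH.1.eigenvalues i ≤ R ^ 2 :=
  det_normalized_eigenvalue_bounds_general hR hγ H hH hbd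
end

section
/- Let N ≥ 1 and for each l ∈ ℕ let A_l(1), …, A_l(N) be nonnegative real numbers such that Σ_{i=1}^{N} A_l(i) = N for every l, and such that Π_{i=1}^{N} A_l(i) → 1 as l → ∞. Then for every i ∈ {1, …, N}, A_l(i) → 1 as l → ∞. -/
/-!
The vectors `A l` stay in the compact box `[0, N]^N`, so it suffices that every cluster point `B`
of `l ↦ A l` is the all-ones vector. Such a `B` is nonnegative with `∑ B = N` and `∏ B = 1`, i.e.
its arithmetic and geometric means are both `1`, and by the equality case of AM–GM all its
entries equal `1`.
-/

open Filter Topology Finset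

theorem MapClusterPt.apply_eq_of_tendsto {X Y Z : Type*} [TopologicalSpace X] [TopologicalSpace Z]
    [T2Space Z] {l : Filter Y} {u : Y → X} {x : X} {g : X → Z} {c : Z}
    (hx : MapClusterPt x l u) (hg : Continuous g) (hgu : Tendsto (g ∘ u) l (𝓝 c)) : g x = c :=
  eq_of_nhds_neBot ((hx.continuousAt_comp hg.continuousAt).clusterPt.mono hgu)

theorem eq_one_of_sum_eq_card_of_prod_eq_one {ι : Type*} [Fintype ι] {z : ι → ℝ}
    (hz : ∀ i, 0 ≤ z i) (hsum : ∑ i, z i = Fintype.card ι) (hprod : ∏ i, z i = 1) : z = 1 := by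
  ext j
  have hcard : (0 : ℝ) < Fintype.card ι := Nat.cast_pos.2 (Fintype.card_pos_iff.2 ⟨j⟩)
  set w : ι → ℝ := fun _ => (Fintype.card ι : ℝ)⁻¹
  have hmean : ∑ i, w i * z i = 1 := by
    rw [← mul_sum, hsum, inv_mul_cancel₀ hcard.ne']
  have hgeom : ∏ i, z i ^ w i = 1 := by
    rw [Real.finsetProd_rpow _ _ (fun i _ => hz i), hprod, Real.one_rpow]
  have hzj := (Real.geom_mean_eq_arith_mean_weighted_iff_of_pos' univ w z
    (fun _ _ => inv_pos.2 hcard) (by simp [w, hcard.ne']) (fun i _ => hz i)).1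
    (hgeom.trans hmean.symm) j (mem_univ j)
  rwa [hmean] at hzj

theorem tendsto_nhds_one_of_sum_eq_card_of_prod_tendsto_one {ι α : Type*} [Fintype ι]
    {l : Filter α} {A : α → ι → ℝ} (hnonneg : ∀ a, 0 ≤ A a)
    (hsum : ∀ a, ∑ i, A a i = Fintype.card ι) (hprod : Tendsto (fun a => ∏ i, A a i) l (𝓝 1)) :
    Tendsto A l (𝓝 1) := by
  have hbox : ∀ a, A a ∈ Set.Icc 0 (fun _ => (Fintype.card ι : ℝ)) := fun a =>
    ⟨hnonneg a, fun i => hsum a ▸ single_le_sum (fun j _ => hnonneg a j) (mem_univ i)⟩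
  refine isCompact_Icc.tendsto_nhds_of_unique_mapClusterPt (.of_forall hbox) ?_
  intro B hB hBA
  refine eq_one_of_sum_eq_card_of_prod_eq_one hB.1 ?_ ?_
  · refine hBA.apply_eq_of_tendsto (continuous_finsetSum _ fun i _ => continuous_apply i) ?_
    simp only [Function.comp_def, hsum, tendsto_const_nhds]
  · exact hBA.apply_eq_of_tendsto (continuous_finsetProd _ fun i _ => continuous_apply i) hprod

theorem tendsto_one_of_sum_eq_card_of_prod_tendsto_one_general
    {N : ℕ} (A : ℕ → Fin N → ℝ)
    (hnonneg : ∀ l i, 0 ≤ A l i)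
    (hsum : ∀ l, ∑ i, A l i = N)
    (hprod : Tendsto (fun l => ∏ i, A l i) atTop (nhds 1)) :
    ∀ i, Tendsto (fun l => A l i) atTop (nhds 1) :=
  tendsto_pi_nhds.1 <|
    tendsto_nhds_one_of_sum_eq_card_of_prod_tendsto_one (hnonneg ·) (by simpa using hsum) hprod

/-- If for each `l` the nonnegative reals `A l 1, …, A l N` sum to `N`, and
their products tend to `1` as `l → ∞`, then each `A l i → 1` as `l → ∞`. -/
theorem tendsto_one_of_sum_eq_card_of_prod_tendsto_one
    {N : ℕ} (hN : 1 ≤ N) (A : ℕ → Fin N → ℝ)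
    (hnonneg : ∀ l i, 0 ≤ A l i)
    (hsum : ∀ l, ∑ i, A l i = N)
    (hprod : Tendsto (fun l => ∏ i, A l i) atTop (nhds 1)) :
    ∀ i, Tendsto (fun l => A l i) atTop (nhds 1) :=
  tendsto_one_of_sum_eq_card_of_prod_tendsto_one_general A hnonneg hsum hprod
end
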